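/- Let Φ, Ψ be clause sets, θ₁ = θ₁' ∨ p and θ₂ = θ₂' ∨ ¬p be clauses with resolvent θ = θ₁' ∨ θ₂', and suppose p ∈ sig(Φ) ∩ sig(Ψ). If χ₁ is an intermediate separator of Φ and Ψ relative to θ₁ and χ₂ is an intermediate separator relative to θ₂, then (p ∨ χ₁) ∧ (¬p ∨ χ₂) is an intermediate separator of Φ and Ψ relative to θ. -/

import Mathlib

inductive PropForm : Type where
  | var : ℕ → PropForm
  | tru : PropForm
  | fls : PropForm
  | neg : PropForm → PropForm
  | conj : PropForm → PropForm → PropForm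
  | disj : PropForm → PropForm → PropForm
deriving DecidableEq

namespace PropForm

def eval (v : ℕ → Bool) : PropForm → Bool
  | var p => v p
  | tru => true
  | fls => false
  | neg φ => !(eval v φ)
  | conj φ ψ => eval v φ && eval v ψ
  | disj φ ψ => eval v φ || eval v ψ

def sig : PropForm → Finset ℕ
  | var p => {p}
  | tru => ∅
  | fls => ∅
  | neg φ => sig φ
  | conj φ ψ => sig φ ∪ sig ψ
  | disj φ ψ => sig φ ∪ sig ψ

def impl (φ ψ : PropForm) : PropForm := disj (neg φ) ψ

def iff (φ ψ : PropForm) : PropForm := conj (impl φ ψ) (impl ψ φ)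

end PropForm

/-- Semantic entailment: every model of `φ` is a model of `ψ`. -/
def Entails (φ ψ : PropForm) : Prop :=
  ∀ v : ℕ → Bool, φ.eval v = true → ψ.eval v = true

/-- `χ` is an intermediate separator of `Φ` and `Ψ` relative to the clause `θ`. -/
def IsIntermediateSep (Φ Ψ θ χ : PropForm) : Prop :=
  χ.sig ⊆ Φ.sig ∩ Ψ.sig ∧ Entails Φ (θ.disj χ) ∧ Entails Ψ (θ.disj χ.neg)

namespace PropForm

variable {v : ℕ → Bool} {θ₁ θ₂ π χ₁ χ₂ : PropForm}

def pivotCombine (π χ₁ χ₂ : PropForm) : PropForm :=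
  (π.disj χ₁).conj (π.neg.disj χ₂)

theorem sig_pivotCombine : (pivotCombine π χ₁ χ₂).sig = π.sig ∪ χ₁.sig ∪ χ₂.sig := by
  simp only [pivotCombine, sig]
  ac_rfl

theorem eval_resolve_disj_pivotCombine
    (h₁ : ((θ₁.disj π).disj χ₁).eval v) (h₂ : ((θ₂.disj π.neg).disj χ₂).eval v) :
    ((θ₁.disj θ₂).disj (pivotCombine π χ₁ χ₂)).eval v := by
  simp only [pivotCombine, eval] at *
  cases hπ : eval v π <;> simp_all <;> tauto

theorem eval_resolve_disj_neg_pivotCombine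
    (h₁ : ((θ₁.disj π).disj χ₁.neg).eval v) (h₂ : ((θ₂.disj π.neg).disj χ₂.neg).eval v) :
    ((θ₁.disj θ₂).disj (pivotCombine π χ₁ χ₂).neg).eval v := by
  simp only [pivotCombine, eval] at *
  cases hπ : eval v π <;> simp_all <;> tauto

end PropForm

open PropForm

theorem IsIntermediateSep.resolve {Φ Ψ θ₁ θ₂ π χ₁ χ₂ : PropForm}
    (hπ : π.sig ⊆ Φ.sig ∩ Ψ.sig)
    (h₁ : IsIntermediateSep Φ Ψ (θ₁.disj π) χ₁)
    (h₂ : IsIntermediateSep Φ Ψ (θ₂.disj π.neg) χ₂) :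
    IsIntermediateSep Φ Ψ (θ₁.disj θ₂) (pivotCombine π χ₁ χ₂) := by
  obtain ⟨hs₁, hΦ₁, hΨ₁⟩ := h₁
  obtain ⟨hs₂, hΦ₂, hΨ₂⟩ := h₂
  refine ⟨?_, fun v hv => ?_, fun v hv => ?_⟩
  · rw [sig_pivotCombine]
    exact Finset.union_subset (Finset.union_subset hπ hs₁) hs₂
  · exact eval_resolve_disj_pivotCombine (hΦ₁ v hv) (hΦ₂ v hv)
  · exact eval_resolve_disj_neg_pivotCombine (hΨ₁ v hv) (hΨ₂ v hv)

/-- Resolution upon a shared atom `p ∈ sig(Φ) ∩ sig(Ψ)`: the formula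
`(p ∨ χ₁) ∧ (¬p ∨ χ₂)` is an intermediate separator for the resolvent. -/
theorem intermediate_sep_resolution_shared (Φ Ψ θ₁' θ₂' χ₁ χ₂ : PropForm) (p : ℕ)
    (hpΦ : p ∈ Φ.sig) (hpΨ : p ∈ Ψ.sig)
    (h₁ : IsIntermediateSep Φ Ψ (θ₁'.disj (PropForm.var p)) χ₁)
    (h₂ : IsIntermediateSep Φ Ψ (θ₂'.disj (PropForm.var p).neg) χ₂) :
    IsIntermediateSep Φ Ψ (θ₁'.disj θ₂')
      (((PropForm.var p).disj χ₁).conj ((PropForm.var p).neg.disj χ₂)) := by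
  have hp : (PropForm.var p).sig ⊆ Φ.sig ∩ Ψ.sig :=
    Finset.singleton_subset_iff.mpr (Finset.mem_inter.mpr ⟨hpΦ, hpΨ⟩)
  exact h₁.resolve hp h₂
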